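/- Let m ≥ 2 and let w, v be non-empty words in 𝒜₁, 𝒜₂ respectively. Then, modulo L^{(m−1)}, one has (Ψ^{(m)} ∘ j₁^{(m)})(w) = j₁^{(m−1)}(w) + g₁^{(m−1)}(w) and (Ψ^{(m)} ∘ j₂^{(m)})(v) = j₂^{(m−1)}(v) + g₂^{(m−1)}(v), where g₁^{(m−1)}(w) = ψ₁(w)·(1^{⊗(m−1)} ⊗ 1^{⊗(m−2)} ⊗ (1−t)) and g₂^{(m−1)}(v) = ψ₂(v)·(1^{⊗(m−2)} ⊗ (1−t) ⊗ 1^{⊗(m−1)}). (Proposition 3.0) -/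

import Mathlib

open scoped ComplexOrder TensorProduct

/-- `w` is a non-empty word in the generating set `G`. -/
def IsWord {R : Type*} [Monoid R] (G : Set R) (w : R) : Prop :=
  ∃ l : List R, l ≠ [] ∧ (∀ x ∈ l, x ∈ G) ∧ w = l.prod

/-- `φ` is a state on the unital complex *-algebra `R`. -/
def IsState {R : Type*} [Ring R] [Algebra ℂ R] [StarRing R] (φ : R →ₗ[ℂ] ℂ) : Prop :=
  φ 1 = 1 ∧ ∀ x, 0 ≤ φ (x * star x)

/-- The ordered product `f a * f (a+1) * ⋯ * f b` (an empty product if `b < a`). -/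
def ordProd {T : Type*} [Monoid T] (f : ℕ → T) (a b : ℕ) : T :=
  ((List.range' a (b + 1 - a)).map f).prod

/-- The element `t_{[k,m]}`: `g` at the tensor sites `k, …, m` (1-based), with the
convention `t_{[0,m]} = 0`. -/
def tBlock {T : Type*} [Ring T] (g : ℕ → T) (k m : ℕ) : T :=
  if k = 0 then 0 else ordProd g k m

/-- The embedding at tensor site `k` among the sites `1, …, m`, with value `0` out of
range (the convention `i_{m+1,m}(a) = 0`). -/
def embSite {T R : Type*} [Ring T] (e : ℕ → R → T) (m k : ℕ) (x : R) : T :=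
  if 1 ≤ k ∧ k ≤ m then e k x else 0

/-- `φt` is the Boolean extension of the state `φ` to the free product `S = R * ℂ[t]`
(with canonical embedding `ι : R → S` and separator `t`):  one has `φt 1 = 1` and
`φt (t^{e₀} w₁ t^{e₁} ⋯ wₙ t^{eₙ}) = φ(w₁) ⋯ φ(wₙ)` for all non-empty words `wᵢ` in the
generating set `G` and all exponents with `e₁, …, e_{n-1} > 0`. -/
def IsBooleanExt {R S : Type*} [Ring R] [Algebra ℂ R] [Ring S] [Algebra ℂ S]
    (G : Set R) (ι : R → S) (t : S) (φ : R →ₗ[ℂ] ℂ) (φt : S →ₗ[ℂ] ℂ) : Prop :=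
  φt 1 = 1 ∧
  ∀ (n : ℕ) (w : ℕ → R) (e : ℕ → ℕ),
    (∀ i < n, IsWord G (w i)) →
    (∀ i, 0 < i → i < n → 0 < e i) →
    φt (((List.range n).map fun i => t ^ e i * ι (w i)).prod * t ^ e n) =
      ((List.range n).map fun i => φ (w i)).prod

/-!
Let `e_X,k` and `e_Y,k` be the site embeddings of the two factors, and write `u = e_Y,m(t)` and
`P = 1 - e_Y,m-1(t)`. Then `j^{(m)}(α) = (J(α) + e_X,m(α) P) u`, where `J(α)` is the formula for
`j^{(m-1)}(α)` on the first `m - 1` sites. On the span of the elementary tensors over those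
sites, `Ψ` is multiplicative and acts as the shift `e ↦ f` (primes below denote shifted
elements). It also turns a last-site factor `e_X,m(a) e_Y,m(t^k)` into the scalar `ψ̃_X(a)`,
since `ψ̃_Y(t^k) = 1`. Expanding `Ψ(j^{(m)}(α₁ ⋯ αₙ))` letter by letter, every mixed term
contains `J'(α) P'` or `P' J'(β)`. These lie in `L`, because `J'` ends with `t` at site `m - 1`
and `t(1 - t) ∈ L`. Since also `P'² ≡ P'`, only `j^{(m-1)}(w)` and `ψ(w) P'` survive.
-/

section OrdProd

variable {M : Type*} [Monoid M]

theorem ordProd_of_lt (g : ℕ → M) {a b : ℕ} (h : b < a) : ordProd g a b = 1 := by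
  simp [ordProd, show b + 1 - a = 0 by omega]

theorem ordProd_self (g : ℕ → M) (a : ℕ) : ordProd g a a = g a := by
  simp [ordProd]

theorem ordProd_succ (g : ℕ → M) {a b : ℕ} (h : a ≤ b + 1) :
    ordProd g a (b + 1) = ordProd g a b * g (b + 1) := by
  rw [ordProd, show b + 1 + 1 - a = b + 1 - a + 1 by omega, List.range'_concat,
    List.map_append, List.prod_append, one_mul, show a + (b + 1 - a) = b + 1 by omega]
  simp [ordProd]

theorem ordProd_congr {g g' : ℕ → M} {a b : ℕ} (h : ∀ l, a ≤ l → l ≤ b → g l = g' l) :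
    ordProd g a b = ordProd g' a b := by
  refine congrArg List.prod (List.map_congr_left fun l hl => ?_)
  rw [List.mem_range'_1] at hl
  exact h l hl.1 (by omega)

theorem ordProd_eq_one {g : ℕ → M} {a b : ℕ} (h : ∀ l, a ≤ l → l ≤ b → g l = 1) :
    ordProd g a b = 1 := by
  rw [ordProd_congr h]
  simp [ordProd]

theorem Commute.ordProd_right {x : M} {g : ℕ → M} {a b : ℕ}
    (h : ∀ l, a ≤ l → l ≤ b → Commute x (g l)) : Commute x (ordProd g a b) := by
  refine Commute.list_prod_right _ _ fun y hy => ?_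
  obtain ⟨l, hl, rfl⟩ := List.mem_map.mp hy
  rw [List.mem_range'_1] at hl
  exact h l hl.1 (by omega)

theorem ordProd_mul_ordProd {g h : ℕ → M} (hgh : ∀ l l', l ≠ l' → Commute (g l) (h l'))
    (a b : ℕ) : ordProd g a b * ordProd h a b = ordProd (fun l => g l * h l) a b := by
  induction b with
  | zero => rcases a with _ | a <;> simp [ordProd_self, ordProd_of_lt]
  | succ b ih =>
    by_cases hab : a ≤ b + 1
    · have hcomm : Commute (g (b + 1)) (ordProd h a b) :=
        Commute.ordProd_right fun l _ hl => hgh _ _ (by omega)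
      rw [ordProd_succ _ hab, ordProd_succ _ hab, ordProd_succ _ hab, ← ih, mul_assoc,
        ← mul_assoc (g _), hcomm.eq]
      simp only [mul_assoc]
    · simp [ordProd_of_lt _ (show b + 1 < a by omega)]

theorem ordProd_eq_single {g : ℕ → M} {a b k : ℕ} (hak : a ≤ k) (hkb : k ≤ b)
    (h : ∀ l, l ≠ k → g l = 1) : ordProd g a b = g k := by
  induction b, hkb using Nat.le_induction with
  | base =>
    rcases k with _ | k
    · rw [Nat.le_zero.mp hak, ordProd_self]
    · rw [ordProd_succ _ (by omega), ordProd_eq_one fun l _ hl => h l (by omega), one_mul]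
  | succ b hkb ih => rw [ordProd_succ _ (by omega), ih, h (b + 1) (by omega), mul_one]

theorem ordProd_mem {S : Type*} [SetLike S M] [SubmonoidClass S M] {s : S} {g : ℕ → M}
    {a b : ℕ} (h : ∀ l, a ≤ l → l ≤ b → g l ∈ s) : ordProd g a b ∈ s := by
  refine list_prod_mem fun y hy => ?_
  obtain ⟨l, hl, rfl⟩ := List.mem_map.mp hy
  rw [List.mem_range'_1] at hl
  exact h l hl.1 (by omega)

theorem map_ordProd_of_map_mul {M' S : Type*} [Monoid M'] [SetLike S M] [SubmonoidClass S M]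
    {s : S} {φ : M → M'} (h1 : φ 1 = 1) (hmul : ∀ x ∈ s, ∀ y ∈ s, φ (x * y) = φ x * φ y)
    {g : ℕ → M} {g' : ℕ → M'} {a b : ℕ} (hg : ∀ l, a ≤ l → l ≤ b → g l ∈ s ∧ φ (g l) = g' l) :
    φ (ordProd g a b) = ordProd g' a b := by
  suffices h : ∀ L : List ℕ, (∀ l ∈ L, g l ∈ s ∧ φ (g l) = g' l) →
      φ (L.map g).prod = (L.map g').prod from
    h _ fun l hl => by rw [List.mem_range'_1] at hl; exact hg l hl.1 (by omega)
  intro L hL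
  induction L with
  | nil => exact h1
  | cons l L ih =>
    have hL' : ∀ l ∈ L, g l ∈ s ∧ φ (g l) = g' l := fun l' hl' =>
      hL l' (List.mem_cons_of_mem _ hl')
    have hmem : (L.map g).prod ∈ s := list_prod_mem fun y hy => by
      obtain ⟨l', hl', rfl⟩ := List.mem_map.mp hy
      exact (hL' l' hl').1
    rw [List.map_cons, List.prod_cons, hmul _ (hL l List.mem_cons_self).1 _ hmem,
      (hL l List.mem_cons_self).2, ih hL', List.map_cons, List.prod_cons]

end OrdProd

theorem map_list_prod_eq_of_eqOn {M N F : Type*} [Monoid M] [Monoid N] [FunLike F M N]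
    [MonoidHomClass F M N] (j : F) {g : M → N} {l : List M} (h : ∀ a ∈ l, j a = g a) :
    j l.prod = (l.map g).prod := by
  rw [map_list_prod]
  exact congrArg _ (List.map_congr_left h)

section Sites

variable {BX BY T : Type*} [Ring T]

theorem tBlock_succ (g : ℕ → T) {k n : ℕ} (hk : k ≤ n + 1) :
    tBlock g k (n + 1) = tBlock g k n * g (n + 1) := by
  unfold tBlock
  split_ifs
  · rw [zero_mul]
  · exact ordProd_succ g hk

theorem embSite_succ (e : ℕ → BX → T) (n k : ℕ) (x : BX) :
    embSite e (n + 1) k x = embSite e n k x + if k = n + 1 then e (n + 1) x else 0 := by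
  unfold embSite
  split_ifs <;> first | omega | simp_all

theorem Commute.tBlock_right {x : T} {g : ℕ → T} (h : ∀ l, Commute x (g l)) (k n : ℕ) :
    Commute x (tBlock g k n) := by
  unfold tBlock
  split_ifs
  · exact Commute.zero_right x
  · exact Commute.ordProd_right fun l _ _ => h l

theorem Commute.embSite_left {e : ℕ → BX → T} {y : T} {a : BX} {n : ℕ}
    (h : ∀ l, 1 ≤ l → l ≤ n → Commute (e l a) y) (k : ℕ) : Commute (embSite e n k a) y := by
  unfold embSite
  split_ifs with hk
  · exact h k hk.1 hk.2
  · exact Commute.zero_left y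

theorem embSite_mem {S : Type*} [SetLike S T] [ZeroMemClass S T] {s : S} {e : ℕ → BX → T}
    {n k : ℕ} {a : BX} (h : ∀ l, 1 ≤ l → l ≤ n → e l a ∈ s) : embSite e n k a ∈ s := by
  unfold embSite
  split_ifs with hk
  · exact h k hk.1 hk.2
  · exact zero_mem s

theorem tBlock_mem {S : Type*} [SetLike S T] [SubmonoidClass S T] [ZeroMemClass S T] {s : S}
    {g : ℕ → T} {k n : ℕ} (h : ∀ l, 1 ≤ l → l ≤ n → g l ∈ s) : tBlock g k n ∈ s := by
  unfold tBlock
  split_ifs with hk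
  · exact zero_mem s
  · exact ordProd_mem fun l hkl hl => h l (by omega) hl

variable [Ring BX] [Ring BY]

structure SiteCommute (eX : ℕ → BX →+* T) (eY : ℕ → BY →+* T) : Prop where
  xx : ∀ k k', k ≠ k' → ∀ x y, Commute (eX k x) (eX k' y)
  yy : ∀ k k', k ≠ k' → ∀ x y, Commute (eY k x) (eY k' y)
  xy : ∀ k k' x y, Commute (eX k x) (eY k' y)

theorem SiteCommute.symm {eX : ℕ → BX →+* T} {eY : ℕ → BY →+* T} (h : SiteCommute eX eY) :
    SiteCommute eY eX :=
  ⟨h.yy, h.xx, fun k k' x y => (h.xy k' k y x).symm⟩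

theorem siteCommute_of_commute {B : Fin 2 → Type*} [∀ i, Ring (B i)] (e : ∀ i, ℕ → B i →+* T)
    (h : ∀ (i i' : Fin 2) (k k' : ℕ), (i, k) ≠ (i', k') →
      ∀ (x : B i) (y : B i'), Commute (e i k x) (e i' k' y)) :
    SiteCommute (e 0) (e 1) where
  xx k k' hk := h 0 0 k k' (by simp [hk])
  yy k k' hk := h 1 1 k k' (by simp [hk])
  xy k k' := h 0 1 k k' (by simp)

/-- The value `j^{(n)}(α)` of the homomorphism `j` on a generator `α` of the first factor. -/
def jGen (eX : ℕ → BX →+* T) (eY : ℕ → BY →+* T) (t : BY) (n : ℕ) (α : BX) : T :=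
  ∑ k ∈ Finset.Icc 1 n,
    (embSite (fun l x => eX l x) n k α - embSite (fun l x => eX l x) n (k + 1) α) *
      tBlock (fun l => eY l t) k n

variable {eX : ℕ → BX →+* T} {eY : ℕ → BY →+* T} {t : BY}

theorem jGen_eq_sum_tBlock_mul (hc : SiteCommute eX eY) (n : ℕ) (α : BX) :
    jGen eX eY t n α = ∑ k ∈ Finset.Icc 1 n, tBlock (fun l => eY l t) k n *
      (embSite (fun l x => eX l x) n k α - embSite (fun l x => eX l x) n (k + 1) α) := by
  refine Finset.sum_congr rfl fun k _ => Commute.eq ?_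
  refine Commute.sub_left ?_ ?_ <;>
    exact Commute.embSite_left (fun _ _ _ => Commute.tBlock_right (fun _ => hc.xy _ _ _ _) _ _) _

theorem commute_jGen (hc : SiteCommute eX eY) {c : BY} (hct : Commute c t) (k n : ℕ)
    (α : BX) : Commute (eY k c) (jGen eX eY t n α) := by
  refine Commute.sum_right _ _ _ fun l _ => Commute.mul_right ?_ ?_
  · refine Commute.sub_right ?_ ?_ <;>
      exact (Commute.embSite_left (fun _ _ _ => hc.xy _ _ _ _) _).symm
  · refine Commute.tBlock_right (fun l' => ?_) _ _
    by_cases hkl : k = l'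
    · exact hkl ▸ hct.map (eY k)
    · exact hc.yy _ _ hkl _ _

theorem commute_eX_jGen (hc : SiteCommute eX eY) {k n : ℕ} (hnk : n < k) (a α : BX) :
    Commute (eX k a) (jGen eX eY t n α) := by
  refine Commute.sum_right _ _ _ fun l _ => Commute.mul_right ?_ ?_
  · refine Commute.sub_right ?_ ?_ <;>
      exact (Commute.embSite_left (fun _ _ hl => hc.xx _ _ (by omega) _ _) _).symm
  · exact Commute.tBlock_right (fun _ => hc.xy _ _ _ _) _ _

theorem jGen_mem {S : Type*} [SetLike S T] [SubringClass S T] {s : S} {n : ℕ} {α : BX}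
    (hX : ∀ k, 1 ≤ k → k ≤ n → eX k α ∈ s) (hY : ∀ k, 1 ≤ k → k ≤ n → eY k t ∈ s) :
    jGen eX eY t n α ∈ s :=
  sum_mem fun _ _ => mul_mem (sub_mem (embSite_mem hX) (embSite_mem hX)) (tBlock_mem hY)

theorem jGen_succ {n : ℕ} (hn : 0 < n) (α : BX) :
    jGen eX eY t (n + 1) α = (jGen eX eY t n α + eX (n + 1) α * (1 - eY n t)) * eY (n + 1) t := by
  have hterm : ∀ k ∈ Finset.Icc 1 (n + 1),
      (embSite (fun l x => eX l x) (n + 1) k α - embSite (fun l x => eX l x) (n + 1) (k + 1) α) *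
        tBlock (fun l => eY l t) k (n + 1) =
      ((embSite (fun l x => eX l x) n k α - embSite (fun l x => eX l x) n (k + 1) α) *
          tBlock (fun l => eY l t) k n +
        ((if k = n + 1 then eX (n + 1) α else 0) - if k = n then eX (n + 1) α else 0) *
          tBlock (fun l => eY l t) k n) * eY (n + 1) t := by
    intro k hk
    rw [Finset.mem_Icc] at hk
    rw [embSite_succ, embSite_succ, tBlock_succ _ hk.2]
    simp only [add_left_inj]
    noncomm_ring
  have hout : ∀ k, n < k → embSite (fun l x => eX l x) n k α = 0 := fun k hk =>
    if_neg (by omega)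
  have hlast : tBlock (fun l => eY l t) (n + 1) n = 1 := by
    simp [tBlock, ordProd_of_lt]
  have hself : tBlock (fun l => eY l t) n n = eY n t := by
    simp [tBlock, ordProd_self, hn.ne']
  unfold jGen
  rw [Finset.sum_congr rfl hterm, ← Finset.sum_mul, Finset.sum_add_distrib,
    Finset.sum_Icc_succ_top (by omega : 1 ≤ n + 1), hout _ (by omega), hout _ (by omega),
    sub_self, zero_mul, add_zero]
  simp only [sub_mul, ite_mul, zero_mul, Finset.sum_sub_distrib, Finset.sum_ite_eq',
    Finset.mem_Icc, hlast, hself]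
  rw [if_pos (by omega), if_pos (by omega)]
  noncomm_ring

theorem map_jGen_of_map_mul {T' S : Type*} [Ring T'] [SetLike S T] [SubringClass S T] {s : S}
    {fX : ℕ → BX →+* T'} {fY : ℕ → BY →+* T'} (φ : T →+ T') (h1 : φ 1 = 1)
    (hmul : ∀ x ∈ s, ∀ y ∈ s, φ (x * y) = φ x * φ y) {n : ℕ} {α : BX}
    (hX : ∀ k, 1 ≤ k → k ≤ n → eX k α ∈ s ∧ φ (eX k α) = fX k α)
    (hY : ∀ k, 1 ≤ k → k ≤ n → eY k t ∈ s ∧ φ (eY k t) = fY k t) :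
    φ (jGen eX eY t n α) = jGen fX fY t n α := by
  have hemb : ∀ j, embSite (fun l x => eX l x) n j α ∈ s ∧
      φ (embSite (fun l x => eX l x) n j α) = embSite (fun l x => fX l x) n j α := by
    intro j
    unfold embSite
    split_ifs with hj
    · exact hX j hj.1 hj.2
    · exact ⟨zero_mem s, map_zero φ⟩
  have htB : ∀ k, tBlock (fun l => eY l t) k n ∈ s ∧
      φ (tBlock (fun l => eY l t) k n) = tBlock (fun l => fY l t) k n := by
    intro k
    unfold tBlock
    split_ifs with hk
    · exact ⟨zero_mem s, map_zero φ⟩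
    · exact ⟨ordProd_mem fun l hkl hl => (hY l (by omega) hl).1,
        map_ordProd_of_map_mul h1 hmul fun l hkl hl => hY l (by omega) hl⟩
  refine (map_sum φ _ _).trans (Finset.sum_congr rfl fun k _ => ?_)
  rw [hmul _ (sub_mem (hemb k).1 (hemb (k + 1)).1) _ (htB k).1, map_sub, (hemb k).2,
    (hemb (k + 1)).2, (htB k).2]

theorem mul_eX_mul_jGen_succ (hc : SiteCommute eX eY) {n : ℕ} (hn : 0 < n) (X : T) (a α : BX)
    {r : T} (hr : Commute (eY (n + 1) t) r) (k : ℕ) :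
    X * eX (n + 1) a * (jGen eX eY t (n + 1) α * r) * eY (n + 1) (t ^ k) =
      X * jGen eX eY t n α * eX (n + 1) a * r * eY (n + 1) (t ^ (k + 1)) +
        X * (1 - eY n t) * eX (n + 1) (a * α) * r * eY (n + 1) (t ^ (k + 1)) := by
  have hJ : Commute (eX (n + 1) a) (jGen eX eY t n α) :=
    commute_eX_jGen hc n.lt_succ_self a α
  have hP : Commute (eX (n + 1) (a * α)) (1 - eY n t) :=
    (Commute.one_right _).sub_right (hc.xy _ _ _ _)
  have key : eX (n + 1) a * (jGen eX eY t n α + eX (n + 1) α * (1 - eY n t)) =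
      jGen eX eY t n α * eX (n + 1) a + (1 - eY n t) * eX (n + 1) (a * α) := by
    rw [mul_add, hJ.eq, ← mul_assoc, ← map_mul, hP.eq]
  rw [jGen_succ hn, mul_assoc _ (eY (n + 1) t) r, hr.eq, pow_succ', map_mul (eY (n + 1)) t]
  calc _ = X * (eX (n + 1) a * (jGen eX eY t n α + eX (n + 1) α * (1 - eY n t))) * r *
        (eY (n + 1) t * eY (n + 1) (t ^ k)) := by simp only [mul_assoc]
    _ = _ := by rw [key]; simp only [mul_add, add_mul, mul_assoc]

section Ideal

variable {Q F : Type*} [Ring Q] [FunLike F T Q] [RingHomClass F T Q] {π : F} {n : ℕ}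

theorem map_one_sub_mul_self (hπ : π (eY n (t * (1 - t))) = 0) :
    π (1 - eY n t) * π (1 - eY n t) = π (1 - eY n t) := by
  have h : (1 - eY n t) * (1 - eY n t) = (1 - eY n t) - eY n (t * (1 - t)) := by
    rw [map_mul, map_sub, map_one]
    noncomm_ring
  rw [← map_mul, h, map_sub, hπ, sub_zero]

theorem map_jGen_mul_map_one_sub (hn : 0 < n) (hπ : π (eY n (t * (1 - t))) = 0) (α : BX) :
    π (jGen eX eY t n α) * π (1 - eY n t) = 0 := by
  obtain ⟨n, rfl⟩ : ∃ n', n = n' + 1 := ⟨n - 1, by omega⟩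
  have hsite : eY (n + 1) t * (1 - eY (n + 1) t) = eY (n + 1) (t * (1 - t)) := by
    rw [map_mul, map_sub, map_one]
  rw [← map_mul, jGen, Finset.sum_mul, map_sum]
  refine Finset.sum_eq_zero fun k hk => ?_
  rw [mul_assoc, tBlock_succ _ (Finset.mem_Icc.mp hk).2, mul_assoc, hsite, map_mul, map_mul, hπ,
    mul_zero, mul_zero]

theorem map_one_sub_mul_map_jGen (hc : SiteCommute eX eY) (hn : 0 < n)
    (hπ : π (eY n (t * (1 - t))) = 0) (α : BX) :
    π (1 - eY n t) * π (jGen eX eY t n α) = 0 := by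
  have h := (Commute.one_left _).sub_left (commute_jGen hc (Commute.refl t) n n α)
  rw [← map_mul, h.eq, map_mul, map_jGen_mul_map_one_sub hn hπ]

end Ideal

end Sites

section PureTensor

variable {BX BY T : Type*} [Ring BX] [Ring BY] [Ring T] {eX : ℕ → BX →+* T} {eY : ℕ → BY →+* T}

variable (eX eY) in
def pureTensor (n : ℕ) (x : ℕ → BX) (y : ℕ → BY) : T :=
  ordProd (fun k => eX k (x k)) 1 n * ordProd (fun k => eY k (y k)) 1 n

theorem SiteCommute.commute_ordProd (hc : SiteCommute eX eY) (x : ℕ → BX) (y : ℕ → BY)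
    (a b a' b' : ℕ) :
    Commute (ordProd (fun k => eX k (x k)) a b) (ordProd (fun k => eY k (y k)) a' b') :=
  Commute.ordProd_right fun _ _ _ => (Commute.ordProd_right fun _ _ _ => (hc.xy _ _ _ _).symm).symm

theorem pureTensor_comm (hc : SiteCommute eX eY) (n : ℕ) (x : ℕ → BX) (y : ℕ → BY) :
    pureTensor eY eX n y x = pureTensor eX eY n x y :=
  (hc.commute_ordProd x y 1 n 1 n).eq.symm

theorem pureTensor_congr {n : ℕ} {x x' : ℕ → BX} {y y' : ℕ → BY} (hx : ∀ l ≤ n, x l = x' l)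
    (hy : ∀ l ≤ n, y l = y' l) : pureTensor eX eY n x y = pureTensor eX eY n x' y' :=
  congrArg₂ (· * ·) (ordProd_congr fun l _ hl => by rw [hx l hl])
    (ordProd_congr fun l _ hl => by rw [hy l hl])

theorem pureTensor_one (n : ℕ) : pureTensor eX eY n 1 1 = 1 := by
  simp [pureTensor, ordProd]

theorem pureTensor_mul (hc : SiteCommute eX eY) (n : ℕ) (x x' : ℕ → BX) (y y' : ℕ → BY) :
    pureTensor eX eY n x y * pureTensor eX eY n x' y' = pureTensor eX eY n (x * x') (y * y') := by
  unfold pureTensor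
  rw [mul_assoc, ← mul_assoc (ordProd (fun k => eY k (y k)) 1 n),
    ← (hc.commute_ordProd x' y 1 n 1 n).eq, mul_assoc, ← mul_assoc,
    ordProd_mul_ordProd (fun l l' h => hc.xx l l' h _ _),
    ordProd_mul_ordProd (fun l l' h => hc.yy l l' h _ _)]
  simp only [Pi.mul_apply, map_mul]

theorem pureTensor_succ (hc : SiteCommute eX eY) (n : ℕ) (x : ℕ → BX) (y : ℕ → BY) :
    pureTensor eX eY (n + 1) x y =
      pureTensor eX eY n x y * (eX (n + 1) (x (n + 1)) * eY (n + 1) (y (n + 1))) := by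
  unfold pureTensor
  have hcomm : Commute (eX (n + 1) (x (n + 1))) (ordProd (fun k => eY k (y k)) 1 n) :=
    Commute.ordProd_right fun _ _ _ => hc.xy _ _ _ _
  rw [ordProd_succ _ (by omega), ordProd_succ _ (by omega), mul_assoc, ← mul_assoc (eX _ _),
    hcomm.eq, mul_assoc, ← mul_assoc]

theorem eX_eq_pureTensor {k n : ℕ} (hk : 1 ≤ k) (hkn : k ≤ n) (a : BX) :
    eX k a = pureTensor eX eY n (Pi.mulSingle k a) 1 := by
  unfold pureTensor
  rw [ordProd_eq_single hk hkn fun l hl => by simp [Pi.mulSingle_eq_of_ne hl],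
    ordProd_eq_one fun l _ _ => by simp]
  simp

theorem eY_eq_pureTensor {k n : ℕ} (hk : 1 ≤ k) (hkn : k ≤ n) (b : BY) :
    eY k b = pureTensor eX eY n 1 (Pi.mulSingle k b) := by
  unfold pureTensor
  rw [ordProd_eq_single (g := fun l => eY l ((Pi.mulSingle k b : ℕ → BY) l)) hk hkn
      fun l hl => by simp [Pi.mulSingle_eq_of_ne hl],
    ordProd_eq_one (g := fun l => eX l ((1 : ℕ → BX) l)) fun l _ _ => by simp]
  simp

end PureTensor

section Conditioning

variable {R BX BY T T' : Type*} [CommRing R] [Ring BX] [Ring BY] [Ring T] [Algebra R T]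
  [Ring T'] [Algebra R T'] {eX : ℕ → BX →+* T} {eY : ℕ → BY →+* T}
  {fX : ℕ → BX →+* T'} {fY : ℕ → BY →+* T'}

variable (R) in
def pureTensorAlgebra (hc : SiteCommute eX eY) (n : ℕ) : Subalgebra R T :=
  Submodule.toSubalgebra
    (Submodule.span R (Set.range fun p : (ℕ → BX) × (ℕ → BY) => pureTensor eX eY n p.1 p.2))
    (Submodule.subset_span ⟨(1, 1), pureTensor_one n⟩)
    (fun X Y hX hY => by
      have hXY := Submodule.mul_mem_mul hX hY
      rw [Submodule.span_mul_span] at hXY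
      refine Submodule.span_mono ?_ hXY
      rintro _ ⟨_, ⟨p, rfl⟩, _, ⟨q, rfl⟩, rfl⟩
      exact ⟨(p.1 * q.1, p.2 * q.2), (pureTensor_mul hc n _ _ _ _).symm⟩)

section PureTensorAlgebra

variable {hc : SiteCommute eX eY} {n : ℕ}

theorem pureTensorAlgebra_induction {P : T → Prop} (pure : ∀ x y, P (pureTensor eX eY n x y))
    (zero : P 0) (add : ∀ X Y, P X → P Y → P (X + Y)) (smul : ∀ (r : R) X, P X → P (r • X))
    {X : T} (hX : X ∈ pureTensorAlgebra R hc n) : P X := by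
  rw [pureTensorAlgebra, Submodule.mem_toSubalgebra] at hX
  induction hX using Submodule.span_induction with
  | mem _ h => obtain ⟨p, rfl⟩ := h; exact pure _ _
  | zero => exact zero
  | add _ _ _ _ hX hY => exact add _ _ hX hY
  | smul r _ _ hX => exact smul r _ hX

theorem pureTensor_mem (x : ℕ → BX) (y : ℕ → BY) :
    pureTensor eX eY n x y ∈ pureTensorAlgebra R hc n :=
  Submodule.subset_span ⟨(x, y), rfl⟩

theorem eX_mem {k : ℕ} (hk : 1 ≤ k) (hkn : k ≤ n) (a : BX) :
    eX k a ∈ pureTensorAlgebra R hc n := by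
  rw [eX_eq_pureTensor (eY := eY) hk hkn]
  exact pureTensor_mem _ _

theorem eY_mem {k : ℕ} (hk : 1 ≤ k) (hkn : k ≤ n) (b : BY) :
    eY k b ∈ pureTensorAlgebra R hc n := by
  rw [eY_eq_pureTensor (eX := eX) hk hkn]
  exact pureTensor_mem _ _

variable (eX eY fX fY) in
def IsConditionMap (Ψ : T →ₗ[R] T') (ψX : BX → R) (ψY : BY → R) (n : ℕ) : Prop :=
  ∀ x y, Ψ (pureTensor eX eY (n + 1) x y) =
    (ψX (x (n + 1)) * ψY (y (n + 1))) • pureTensor fX fY n x y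

theorem jGen_mem_pureTensorAlgebra (t : BY) (α : BX) :
    jGen eX eY t n α ∈ pureTensorAlgebra R hc n :=
  jGen_mem (fun _ hk hkn => eX_mem hk hkn α) (fun _ hk hkn => eY_mem hk hkn t)

theorem one_sub_eY_mem (hn : 0 < n) (b : BY) : 1 - eY n b ∈ pureTensorAlgebra R hc n :=
  sub_mem (one_mem (pureTensorAlgebra R hc n)) (eY_mem hn le_rfl b)

end PureTensorAlgebra

section IsConditionMap

variable {Ψ : T →ₗ[R] T'} {ψX : BX → R} {ψY : BY → R} {n : ℕ}
  (hc : SiteCommute eX eY) (hc' : SiteCommute fX fY)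

include hc hc' in
theorem IsConditionMap.symm (hΨ : IsConditionMap eX eY fX fY Ψ ψX ψY n) :
    IsConditionMap eY eX fY fX Ψ ψY ψX n := fun y x => by
  rw [pureTensor_comm hc, hΨ, pureTensor_comm hc', mul_comm]

include hc in
theorem IsConditionMap.map_pureTensor_mul (hΨ : IsConditionMap eX eY fX fY Ψ ψX ψY n)
    (x : ℕ → BX) (y : ℕ → BY) (a : BX) (b : BY) :
    Ψ (pureTensor eX eY n x y * (eX (n + 1) a * eY (n + 1) b)) =
      (ψX a * ψY b) • pureTensor fX fY n x y := by
  have h := hΨ (Function.update x (n + 1) a) (Function.update y (n + 1) b)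
  have hx : ∀ l ≤ n, Function.update x (n + 1) a l = x l := fun l hl =>
    Function.update_of_ne (by omega) _ _
  have hy : ∀ l ≤ n, Function.update y (n + 1) b l = y l := fun l hl =>
    Function.update_of_ne (by omega) _ _
  rwa [pureTensor_succ hc, pureTensor_congr hx hy, pureTensor_congr hx hy, Function.update_self,
    Function.update_self] at h

variable (hΨ : IsConditionMap eX eY fX fY Ψ ψX ψY n) (hψX : ψX 1 = 1) (hψY : ψY 1 = 1)
include hc hΨ hψX hψY

theorem IsConditionMap.map_pureTensor (x : ℕ → BX) (y : ℕ → BY) :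
    Ψ (pureTensor eX eY n x y) = pureTensor fX fY n x y := by
  simpa [hψX, hψY] using hΨ.map_pureTensor_mul hc x y 1 1

theorem IsConditionMap.map_mul_top {X : T} (hX : X ∈ pureTensorAlgebra R hc n) (a : BX) (b : BY) :
    Ψ (X * (eX (n + 1) a * eY (n + 1) b)) = (ψX a * ψY b) • Ψ X := by
  refine pureTensorAlgebra_induction
    (P := fun X => Ψ (X * (eX (n + 1) a * eY (n + 1) b)) = (ψX a * ψY b) • Ψ X)
    (fun x y => ?_) (by simp) (fun X Y hX hY => ?_) (fun r X h => ?_) hX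
  · rw [hΨ.map_pureTensor_mul hc, hΨ.map_pureTensor hc hψX hψY]
  · rw [add_mul, map_add, map_add, hX, hY, smul_add]
  · rw [smul_mul_assoc, map_smul, map_smul, h, smul_comm]

include hc' in
theorem IsConditionMap.map_mul_of_mem {X Y : T}
    (hX : X ∈ pureTensorAlgebra R hc n) (hY : Y ∈ pureTensorAlgebra R hc n) :
    Ψ (X * Y) = Ψ X * Ψ Y := by
  refine pureTensorAlgebra_induction (P := fun X => Ψ (X * Y) = Ψ X * Ψ Y) (fun x y => ?_)
    (by simp) (fun X X' hX hX' => by rw [add_mul, map_add, map_add, hX, hX', add_mul])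
    (fun r X h => by rw [smul_mul_assoc, map_smul, map_smul, h, smul_mul_assoc]) hX
  refine pureTensorAlgebra_induction
    (P := fun Y => Ψ (pureTensor eX eY n x y * Y) = Ψ (pureTensor eX eY n x y) * Ψ Y)
    (fun x' y' => ?_) (by simp)
    (fun Y Y' hY hY' => by rw [mul_add, map_add, map_add, hY, hY', mul_add])
    (fun r Y h => by rw [mul_smul_comm, map_smul, map_smul, h, mul_smul_comm]) hY
  rw [pureTensor_mul hc, hΨ.map_pureTensor hc hψX hψY, hΨ.map_pureTensor hc hψX hψY,
    hΨ.map_pureTensor hc hψX hψY, pureTensor_mul hc']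

theorem IsConditionMap.map_one_eq_one : Ψ 1 = 1 := by
  rw [← pureTensor_one (eX := eX) (eY := eY) n, hΨ.map_pureTensor hc hψX hψY, pureTensor_one]

theorem IsConditionMap.map_eX {k : ℕ} (hk : 1 ≤ k) (hkn : k ≤ n) (a : BX) :
    Ψ (eX k a) = fX k a := by
  rw [eX_eq_pureTensor (eY := eY) hk hkn, hΨ.map_pureTensor hc hψX hψY, ← eX_eq_pureTensor hk hkn]

theorem IsConditionMap.map_eY {k : ℕ} (hk : 1 ≤ k) (hkn : k ≤ n) (b : BY) :
    Ψ (eY k b) = fY k b := by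
  rw [eY_eq_pureTensor (eX := eX) hk hkn, hΨ.map_pureTensor hc hψX hψY, ← eY_eq_pureTensor hk hkn]

include hc' in
theorem IsConditionMap.map_jGen (t : BY) (α : BX) :
    Ψ (jGen eX eY t n α) = jGen fX fY t n α :=
  map_jGen_of_map_mul (s := pureTensorAlgebra R hc n) Ψ.toAddMonoidHom
    (hΨ.map_one_eq_one hc hψX hψY) (fun _ hX _ hY => hΨ.map_mul_of_mem hc hc' hψX hψY hX hY)
    (fun _ hk hkn => ⟨eX_mem hk hkn α, hΨ.map_eX hc hψX hψY hk hkn α⟩)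
    (fun _ hk hkn => ⟨eY_mem hk hkn t, hΨ.map_eY hc hψX hψY hk hkn t⟩)

end IsConditionMap

section Main

variable {Ψ : T →ₗ[R] T'} {ψX : BX → R} {ψY : BY → R} {n : ℕ} {t : BY}
  (hc : SiteCommute eX eY) (hc' : SiteCommute fX fY)
  (hΨ : IsConditionMap eX eY fX fY Ψ ψX ψY n) (hn : 0 < n) (hψX : ψX 1 = 1)
  (hψY : ∀ k, ψY (t ^ k) = 1)
include hc hc' hΨ hn hψX hψY

theorem IsConditionMap.map_mul_eX_mul_prod_jGen {Q : Type*} [Ring Q] [Algebra R Q] {π : T' →ₐ[R] Q}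
    (hπ : π (fY n (t * (1 - t))) = 0) {X : T} (hX : X ∈ pureTensorAlgebra R hc n)
    (a : BX) (k : ℕ) (α : BX) (w : List BX) :
    π (Ψ (X * eX (n + 1) a * ((α :: w).map (jGen eX eY t (n + 1))).prod * eY (n + 1) (t ^ k))) =
      π (Ψ X) * (ψX a • π ((α :: w).map (jGen fX fY t n)).prod +
        ψX (a * (α :: w).prod) • π (1 - fY n t)) := by
  have hψY1 : ψY 1 = 1 := by simpa using hψY 0
  have hΨJ : ∀ {X}, X ∈ pureTensorAlgebra R hc n → ∀ β,
      π (Ψ (X * jGen eX eY t n β)) = π (Ψ X) * π (jGen fX fY t n β) := fun hX β => by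
    rw [hΨ.map_mul_of_mem hc hc' hψX hψY1 hX (jGen_mem_pureTensorAlgebra t β), map_mul π,
      hΨ.map_jGen hc hc' hψX hψY1]
  have hΨP : ∀ {X}, X ∈ pureTensorAlgebra R hc n →
      π (Ψ (X * (1 - eY n t))) = π (Ψ X) * π (1 - fY n t) := fun hX => by
    rw [hΨ.map_mul_of_mem hc hc' hψX hψY1 hX (one_sub_eY_mem hn t), map_mul π, map_sub,
      hΨ.map_one_eq_one hc hψX hψY1, hΨ.map_eY hc hψX hψY1 hn le_rfl]
  have hr : ∀ w : List BX, Commute (eY (n + 1) t) (w.map (jGen eX eY t (n + 1))).prod :=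
    fun w => Commute.list_prod_right _ _ fun _ hy => by
      obtain ⟨γ, _, rfl⟩ := List.mem_map.mp hy
      exact commute_jGen hc (Commute.refl t) _ _ γ
  have hbase : ∀ {X}, X ∈ pureTensorAlgebra R hc n → ∀ a k,
      π (Ψ (X * eX (n + 1) a * ([].map (jGen eX eY t (n + 1))).prod * eY (n + 1) (t ^ k))) =
        ψX a • π (Ψ X) := fun hX a k => by
    rw [List.map_nil, List.prod_nil, mul_one, mul_assoc, hΨ.map_mul_top hc hψX hψY1 hX, hψY,
      mul_one, map_smul]
  have hJP : ∀ β, π (jGen fX fY t n β) * π (1 - fY n t) = 0 := map_jGen_mul_map_one_sub hn hπ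
  have hPP : π (1 - fY n t) * π (1 - fY n t) = π (1 - fY n t) := map_one_sub_mul_self hπ
  induction w generalizing α X a k with
  | nil =>
    rw [List.map_cons, List.prod_cons, mul_eX_mul_jGen_succ hc hn X a α (hr []) k, map_add, map_add,
      hbase (mul_mem hX (jGen_mem_pureTensorAlgebra t α)), hbase (mul_mem hX (one_sub_eY_mem hn t)),
      hΨJ hX, hΨP hX]
    simp only [List.map_cons, List.map_nil, List.prod_cons, List.prod_nil, mul_one, mul_add,
      mul_smul_comm]
  | cons β w ih =>
    have hPL : π (1 - fY n t) * π ((β :: w).map (jGen fX fY t n)).prod = 0 := by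
      rw [List.map_cons, List.prod_cons, map_mul π, ← mul_assoc,
        map_one_sub_mul_map_jGen hc' hn hπ β, zero_mul]
    rw [List.map_cons, List.prod_cons, mul_eX_mul_jGen_succ hc hn X a α (hr _) k, map_add, map_add,
      ih (mul_mem hX (jGen_mem_pureTensorAlgebra t α)), ih (mul_mem hX (one_sub_eY_mem hn t)),
      hΨJ hX, hΨP hX, List.map_cons (a := α), List.prod_cons (a := jGen fX fY t n α),
      List.prod_cons (a := α), map_mul π, ← mul_assoc a α]
    simp only [mul_add, mul_smul_comm, mul_assoc, hJP, hPL, hPP, smul_zero, mul_zero, zero_add,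
      add_zero]

theorem IsConditionMap.sub_mem {L : TwoSidedIdeal T'} (hL : fY n (t * (1 - t)) ∈ L)
    (w : List BX) (hw : w ≠ []) :
    Ψ (w.map (jGen eX eY t (n + 1))).prod -
      ((w.map (jGen fX fY t n)).prod + ψX w.prod • fY n (1 - t)) ∈ L := by
  have hmk : ∀ x y, L.ringCon.mkₐ R x = L.ringCon.mkₐ R y ↔ x - y ∈ L := fun x y => by
    rw [RingCon.mkₐ_apply, RingCon.mkₐ_apply, RingCon.eq, TwoSidedIdeal.rel_iff]
  have hπ : L.ringCon.mkₐ R (fY n (t * (1 - t))) = 0 := by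
    rw [← map_zero (L.ringCon.mkₐ R), hmk, sub_zero]
    exact hL
  obtain ⟨α, w, rfl⟩ := List.exists_cons_of_ne_nil hw
  have h := hΨ.map_mul_eX_mul_prod_jGen hc hc' hn hψX hψY hπ (one_mem _) 1 0 α w
  rw [← hmk]
  simpa [hΨ.map_one_eq_one hc hψX (by simpa using hψY 0), hψX] using h

theorem IsConditionMap.sub_mem_of_isWord {A Fι Fj Fj' : Type*} [Monoid A] [FunLike Fι A BX]
    [MonoidHomClass Fι A BX] [FunLike Fj A T] [MonoidHomClass Fj A T] [FunLike Fj' A T']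
    [MonoidHomClass Fj' A T'] {G : Set A} {ι : Fι} {j : Fj} {j' : Fj'}
    (hj : ∀ a ∈ G, j a = jGen eX eY t (n + 1) (ι a)) (hj' : ∀ a ∈ G, j' a = jGen fX fY t n (ι a))
    {L : TwoSidedIdeal T'} (hL : fY n (t * (1 - t)) ∈ L) {w : A} (hw : IsWord G w) :
    Ψ (j w) - (j' w + ψX (ι w) • fY n (1 - t)) ∈ L := by
  obtain ⟨l, hl, hG, rfl⟩ := hw
  have h := hΨ.sub_mem hc hc' hn hψX hψY hL (l.map ι) (by simpa using hl)
  rw [List.map_map, List.map_map, ← map_list_prod] at h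
  rwa [map_list_prod_eq_of_eqOn j fun a ha => hj a (hG a ha),
    map_list_prod_eq_of_eqOn j' fun a ha => hj' a (hG a ha)]

end Main

end Conditioning

theorem IsBooleanExt.apply_pow {R S : Type*} [Ring R] [Algebra ℂ R] [Ring S] [Algebra ℂ S]
    {G : Set R} {ι : R → S} {t : S} {φ : R →ₗ[ℂ] ℂ} {φt : S →ₗ[ℂ] ℂ}
    (h : IsBooleanExt G ι t φ φt) (k : ℕ) : φt (t ^ k) = 1 := by
  simpa using h.2 0 (fun _ => 1) (fun _ => k) (by simp) (by omega)

theorem IsBooleanExt.apply_word {R S : Type*} [Ring R] [Algebra ℂ R] [Ring S] [Algebra ℂ S]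
    {G : Set R} {ι : R → S} {t : S} {φ : R →ₗ[ℂ] ℂ} {φt : S →ₗ[ℂ] ℂ}
    (h : IsBooleanExt G ι t φ φt) {w : R} (hw : IsWord G w) : φt (ι w) = φ w := by
  simpa using h.2 1 (fun _ => w) (fun _ => 0) (fun _ _ => hw) (by omega)

/- `A i` is the unital free *-algebra `𝒜ᵢ₊₁` with generating set `G i`; `B i` is
`𝒜̃ᵢ₊₁ = 𝒜ᵢ₊₁ * ℂ[t]` with embedding `ι i` and hermitian separator `t i`;
`T = 𝒜̃^{(m)}` and `T' = 𝒜̃^{(m-1)}` are the `m`- and `(m-1)`-level tensor products, with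
commuting site embeddings `e i k` (`k = 1, …, m`) and `f i k` (`k = 1, …, m-1`);
`Ψ = Ψ^{(m)} = id^{⊗(m-1)} ⊗ ψ̃₁ ⊗ id^{⊗(m-1)} ⊗ ψ̃₂ : T → T'` is the condition map;
`j i`, `j' i` are the *-homomorphisms `jᵢ₊₁^{(m)}`, `jᵢ₊₁^{(m-1)}`; `L'` is the ideal
`L^{(m-1)}`. -/
theorem condition_map_on_j_general
    {A B : Fin 2 → Type*} {T T' : Type*}
    [∀ i, Ring (A i)] [∀ i, Algebra ℂ (A i)] [∀ i, StarRing (A i)]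
    [∀ i, Ring (B i)] [∀ i, Algebra ℂ (B i)] [∀ i, StarRing (B i)]
    [Ring T] [Algebra ℂ T] [StarRing T]
    [Ring T'] [Algebra ℂ T'] [StarRing T']
    (G : ∀ i, Set (A i))
    (ι : ∀ i, A i →⋆ₐ[ℂ] B i) (t : ∀ i, B i)
    (m : ℕ) (hm : 2 ≤ m)
    (e : ∀ i, ℕ → B i →⋆ₐ[ℂ] T)
    (hcomm : ∀ (i i' : Fin 2) (k k' : ℕ), (i, k) ≠ (i', k') →
      ∀ (x : B i) (y : B i'), Commute (e i k x) (e i' k' y))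
    (f : ∀ i, ℕ → B i →⋆ₐ[ℂ] T')
    (hcomm' : ∀ (i i' : Fin 2) (k k' : ℕ), (i, k) ≠ (i', k') →
      ∀ (x : B i) (y : B i'), Commute (f i k x) (f i' k' y))
    -- the states `ψᵢ` and their Boolean extensions `ψt i`
    (ψ : ∀ i, A i →ₗ[ℂ] ℂ)
    (ψt : ∀ i, B i →ₗ[ℂ] ℂ)
    (hψt : ∀ i, IsBooleanExt (G i) (⇑(ι i)) (t i) (ψ i) (ψt i))
    -- the condition map `Ψ^{(m)} = id^{⊗(m-1)} ⊗ ψ̃₁ ⊗ id^{⊗(m-1)} ⊗ ψ̃₂`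
    (Ψ : T →ₗ[ℂ] T')
    (hΨ : ∀ (x : ℕ → B 0) (y : ℕ → B 1),
      Ψ (ordProd (fun k => e 0 k (x k)) 1 m * ordProd (fun k => e 1 k (y k)) 1 m) =
        (ψt 0 (x m) * ψt 1 (y m)) •
          (ordProd (fun k => f 0 k (x k)) 1 (m - 1) * ordProd (fun k => f 1 k (y k)) 1 (m - 1)))
    -- the *-homomorphisms `j^{(m)}` and `j^{(m-1)}`
    (j : ∀ i, A i →⋆ₐ[ℂ] T)
    (hj1 : ∀ a ∈ G 0, j 0 a = ∑ k ∈ Finset.Icc 1 m,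
      (embSite (fun l x => e 0 l x) m k (ι 0 a) - embSite (fun l x => e 0 l x) m (k + 1) (ι 0 a)) *
        tBlock (fun l => e 1 l (t 1)) k m)
    (hj2 : ∀ b ∈ G 1, j 1 b = ∑ k ∈ Finset.Icc 1 m,
      tBlock (fun l => e 0 l (t 0)) k m *
        (embSite (fun l x => e 1 l x) m k (ι 1 b) - embSite (fun l x => e 1 l x) m (k + 1) (ι 1 b)))
    (j' : ∀ i, A i →⋆ₐ[ℂ] T')
    (hj1' : ∀ a ∈ G 0, j' 0 a = ∑ k ∈ Finset.Icc 1 (m - 1),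
      (embSite (fun l x => f 0 l x) (m - 1) k (ι 0 a) -
        embSite (fun l x => f 0 l x) (m - 1) (k + 1) (ι 0 a)) *
          tBlock (fun l => f 1 l (t 1)) k (m - 1))
    (hj2' : ∀ b ∈ G 1, j' 1 b = ∑ k ∈ Finset.Icc 1 (m - 1),
      tBlock (fun l => f 0 l (t 0)) k (m - 1) *
        (embSite (fun l x => f 1 l x) (m - 1) k (ι 1 b) -
          embSite (fun l x => f 1 l x) (m - 1) (k + 1) (ι 1 b)))
    -- the two-sided *-ideal `L^{(m-1)}`
    (L' : TwoSidedIdeal T')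
    (hL' : L' = TwoSidedIdeal.span
      {x : T' | ∃ (i : Fin 2) (k : ℕ), 1 ≤ k ∧ k ≤ m - 1 ∧ x = f i k (t i * (1 - t i))})
    -- non-empty words `w`, `v` in `𝒜₁`, `𝒜₂`
    (w : A 0) (v : A 1) (hw : IsWord (G 0) w) (hv : IsWord (G 1) v) :
    -- `(Ψ^{(m)} ∘ j₁^{(m)})(w) = j₁^{(m-1)}(w) + g₁^{(m-1)}(w)  (mod L^{(m-1)})`
    Ψ (j 0 w) - (j' 0 w + ψ 0 w • f 1 (m - 1) (1 - t 1)) ∈ L'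
    ∧
    -- `(Ψ^{(m)} ∘ j₂^{(m)})(v) = j₂^{(m-1)}(v) + g₂^{(m-1)}(v)  (mod L^{(m-1)})`
    Ψ (j 1 v) - (j' 1 v + ψ 1 v • f 0 (m - 1) (1 - t 0)) ∈ L' := by
  obtain ⟨n, rfl⟩ : ∃ n, m = n + 1 := ⟨m - 1, by omega⟩
  simp only [Nat.add_sub_cancel] at hΨ hj1' hj2' hL' ⊢
  have hn : 0 < n := by omega
  have hc := siteCommute_of_commute (fun i k => (e i k : B i →+* T)) hcomm
  have hc' := siteCommute_of_commute (fun i k => (f i k : B i →+* T')) hcomm'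
  have hΨ' : IsConditionMap (fun k => (e 0 k : B 0 →+* T)) (fun k => (e 1 k : B 1 →+* T))
      (fun k => (f 0 k : B 0 →+* T')) (fun k => (f 1 k : B 1 →+* T')) Ψ (ψt 0) (ψt 1) n := hΨ
  have hL : ∀ i, f i n (t i * (1 - t i)) ∈ L' := fun i =>
    hL' ▸ TwoSidedIdeal.subset_span ⟨i, n, hn, le_rfl, rfl⟩
  rw [← (hψt 0).apply_word hw, ← (hψt 1).apply_word hv]
  exact ⟨hΨ'.sub_mem_of_isWord hc hc' hn (hψt 0).1 (hψt 1).apply_pow hj1 hj1' (hL 1) hw,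
    (hΨ'.symm hc hc').sub_mem_of_isWord hc.symm hc'.symm hn (hψt 1).1 (hψt 0).apply_pow
      (fun b hb => (hj2 b hb).trans (jGen_eq_sum_tBlock_mul hc.symm _ _).symm)
      (fun b hb => (hj2' b hb).trans (jGen_eq_sum_tBlock_mul hc'.symm _ _).symm) (hL 0) hv⟩

theorem condition_map_on_j
    {A B : Fin 2 → Type*} {T T' : Type*}
    [∀ i, Ring (A i)] [∀ i, Algebra ℂ (A i)] [∀ i, StarRing (A i)] [∀ i, StarModule ℂ (A i)]
    [∀ i, Ring (B i)] [∀ i, Algebra ℂ (B i)] [∀ i, StarRing (B i)] [∀ i, StarModule ℂ (B i)]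
    [Ring T] [Algebra ℂ T] [StarRing T] [StarModule ℂ T]
    [Ring T'] [Algebra ℂ T'] [StarRing T'] [StarModule ℂ T']
    (G : ∀ i, Set (A i)) (hG : ∀ i, ∀ x ∈ G i, star x ∈ G i)
    (hA : ∀ i, Algebra.adjoin ℂ (G i) = ⊤)
    (ι : ∀ i, A i →⋆ₐ[ℂ] B i) (t : ∀ i, B i) (ht : ∀ i, star (t i) = t i)
    (hB : ∀ i, Algebra.adjoin ℂ (Set.range (ι i) ∪ {t i}) = ⊤)
    (m : ℕ) (hm : 2 ≤ m)
    (e : ∀ i, ℕ → B i →⋆ₐ[ℂ] T)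
    (hcomm : ∀ (i i' : Fin 2) (k k' : ℕ), (i, k) ≠ (i', k') →
      ∀ (x : B i) (y : B i'), Commute (e i k x) (e i' k' y))
    (hT : Algebra.adjoin ℂ
      {x : T | ∃ (i : Fin 2) (k : ℕ), 1 ≤ k ∧ k ≤ m ∧ ∃ b : B i, x = e i k b} = ⊤)
    (f : ∀ i, ℕ → B i →⋆ₐ[ℂ] T')
    (hcomm' : ∀ (i i' : Fin 2) (k k' : ℕ), (i, k) ≠ (i', k') →
      ∀ (x : B i) (y : B i'), Commute (f i k x) (f i' k' y))
    (hT' : Algebra.adjoin ℂ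
      {x : T' | ∃ (i : Fin 2) (k : ℕ), 1 ≤ k ∧ k ≤ m - 1 ∧ ∃ b : B i, x = f i k b} = ⊤)
    -- the states `ψᵢ` and their Boolean extensions `ψt i`
    (ψ : ∀ i, A i →ₗ[ℂ] ℂ) (hψ : ∀ i, IsState (ψ i))
    (ψt : ∀ i, B i →ₗ[ℂ] ℂ)
    (hψt : ∀ i, IsBooleanExt (G i) (⇑(ι i)) (t i) (ψ i) (ψt i))
    -- the condition map `Ψ^{(m)} = id^{⊗(m-1)} ⊗ ψ̃₁ ⊗ id^{⊗(m-1)} ⊗ ψ̃₂`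
    (Ψ : T →ₗ[ℂ] T')
    (hΨ : ∀ (x : ℕ → B 0) (y : ℕ → B 1),
      Ψ (ordProd (fun k => e 0 k (x k)) 1 m * ordProd (fun k => e 1 k (y k)) 1 m) =
        (ψt 0 (x m) * ψt 1 (y m)) •
          (ordProd (fun k => f 0 k (x k)) 1 (m - 1) * ordProd (fun k => f 1 k (y k)) 1 (m - 1)))
    -- the *-homomorphisms `j^{(m)}` and `j^{(m-1)}`
    (j : ∀ i, A i →⋆ₐ[ℂ] T)
    (hj1 : ∀ a ∈ G 0, j 0 a = ∑ k ∈ Finset.Icc 1 m,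
      (embSite (fun l x => e 0 l x) m k (ι 0 a) - embSite (fun l x => e 0 l x) m (k + 1) (ι 0 a)) *
        tBlock (fun l => e 1 l (t 1)) k m)
    (hj2 : ∀ b ∈ G 1, j 1 b = ∑ k ∈ Finset.Icc 1 m,
      tBlock (fun l => e 0 l (t 0)) k m *
        (embSite (fun l x => e 1 l x) m k (ι 1 b) - embSite (fun l x => e 1 l x) m (k + 1) (ι 1 b)))
    (j' : ∀ i, A i →⋆ₐ[ℂ] T')
    (hj1' : ∀ a ∈ G 0, j' 0 a = ∑ k ∈ Finset.Icc 1 (m - 1),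
      (embSite (fun l x => f 0 l x) (m - 1) k (ι 0 a) -
        embSite (fun l x => f 0 l x) (m - 1) (k + 1) (ι 0 a)) *
          tBlock (fun l => f 1 l (t 1)) k (m - 1))
    (hj2' : ∀ b ∈ G 1, j' 1 b = ∑ k ∈ Finset.Icc 1 (m - 1),
      tBlock (fun l => f 0 l (t 0)) k (m - 1) *
        (embSite (fun l x => f 1 l x) (m - 1) k (ι 1 b) -
          embSite (fun l x => f 1 l x) (m - 1) (k + 1) (ι 1 b)))
    -- the two-sided *-ideal `L^{(m-1)}`
    (L' : TwoSidedIdeal T')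
    (hL' : L' = TwoSidedIdeal.span
      {x : T' | ∃ (i : Fin 2) (k : ℕ), 1 ≤ k ∧ k ≤ m - 1 ∧ x = f i k (t i * (1 - t i))})
    -- non-empty words `w`, `v` in `𝒜₁`, `𝒜₂`
    (w : A 0) (v : A 1) (hw : IsWord (G 0) w) (hv : IsWord (G 1) v) :
    -- `(Ψ^{(m)} ∘ j₁^{(m)})(w) = j₁^{(m-1)}(w) + g₁^{(m-1)}(w)  (mod L^{(m-1)})`
    Ψ (j 0 w) - (j' 0 w + ψ 0 w • f 1 (m - 1) (1 - t 1)) ∈ L'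
    ∧
    -- `(Ψ^{(m)} ∘ j₂^{(m)})(v) = j₂^{(m-1)}(v) + g₂^{(m-1)}(v)  (mod L^{(m-1)})`
    Ψ (j 1 v) - (j' 1 v + ψ 1 v • f 0 (m - 1) (1 - t 0)) ∈ L' :=
  condition_map_on_j_general G ι t m hm e hcomm f hcomm' ψ ψt hψt Ψ hΨ j hj1 hj2 j' hj1' hj2' L' hL'
    w v hw hv
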